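/- Let ω ∈ R^d be Diophantine of class τ with constant ν(ω;τ), let N ≥ 1 be an integer and A > 0. If 2τ > d, then the point λ = 1 is a point of density for the set Λ(A;ω,τ,N) ⊂ C with respect to two-dimensional Lebesgue measure: the ratio of the Lebesgue measure of Λ(A;ω,τ,N) ∩ B(1,r) to the measure of the disk B(1,r) tends to 1 as r → 0^+. If moreover τ > d, then 1 is a point of density for Λ(A;ω,τ,N) ∩ S^1 inside the unit circle S^1 with respect to one-dimensional (arc-length) Lebesgue measure. -/

import Mathlib

open scoped Real ENNReal
open Matrix MeasureTheory Filter Asymptotics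

noncomputable section

namespace KAM

/-! ### Diophantine constants -/

/-- `|k| = ∑ |k_j|` for an integer frequency vector. -/
def intNorm {d : ℕ} (k : Fin d → ℤ) : ℝ := ∑ j, |(k j : ℝ)|

/-- `k · ω`. -/
def intDot {d : ℕ} (k : Fin d → ℤ) (ω : Fin d → ℝ) : ℝ := ∑ j, (k j : ℝ) * ω j

/-- `e^{2 π i k·ω}`. -/
def eDot {d : ℕ} (k : Fin d → ℤ) (ω : Fin d → ℝ) : ℂ :=
  Complex.exp (2 * Real.pi * Complex.I * (intDot k ω : ℂ))

/-- The Diophantine constant `ν(λ; ω, τ) ∈ [0,∞]` of a complex number `λ`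
with respect to `ω`, `ν(λ; ω, τ) = sup_{k ≠ 0} |e^{2πik·ω} − λ|⁻¹ |k|^{-τ}`. -/
def nuC {d : ℕ} (ω : Fin d → ℝ) (τ : ℝ) (lam : ℂ) : ℝ≥0∞ :=
  ⨆ k : {k : Fin d → ℤ // k ≠ 0},
    (ENNReal.ofReal ‖eDot k.1 ω - lam‖)⁻¹ * ENNReal.ofReal (intNorm k.1) ^ (-τ)

/-- The Diophantine constant `ν(ω; τ)` of the frequency `ω`. -/
def nuOmega {d : ℕ} (ω : Fin d → ℝ) (τ : ℝ) : ℝ≥0∞ := nuC ω τ 1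

/-- `ω` is Diophantine of class `τ` (i.e. `ν(ω;τ) < ∞`). -/
def IsDiophantine {d : ℕ} (ω : Fin d → ℝ) (τ : ℝ) : Prop := nuOmega ω τ ≠ ∞

/-! ### Strips, analytic function spaces on the complexified torus -/

/-- The closed strip `T^d_ρ` (as a subset of `ℂ^d`; functions on the torus are
represented by their `ℤ^d`-periodic lifts). -/
def Strip (d : ℕ) (ρ : ℝ) : Set (Fin d → ℂ) := {z | ∀ j, |(z j).im| ≤ ρ}

/-- The open strip (interior of `T^d_ρ`). -/
def StripO (d : ℕ) (ρ : ℝ) : Set (Fin d → ℂ) := {z | ∀ j, |(z j).im| < ρ}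

/-- Sup norm `‖·‖_ρ` over the strip `T^d_ρ`. -/
def stripNorm {d : ℕ} {E : Type*} [NormedAddCommGroup E] (ρ : ℝ)
    (f : (Fin d → ℂ) → E) : ℝ :=
  ⨆ z : Strip d ρ, ‖f z.1‖

/-- `ℤ^d`-periodicity (functions on the torus). -/
def ZPeriodic {d : ℕ} {E : Type*} (f : (Fin d → ℂ) → E) : Prop :=
  ∀ (z : Fin d → ℂ) (k : Fin d → ℤ), f (z + fun j => (k j : ℂ)) = f z

/-- Membership in `A_ρ`: analytic in the interior of the strip `T^d_ρ`,
continuous and bounded on the closed strip. -/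
structure MemA {d : ℕ} {E : Type*} [NormedAddCommGroup E] [NormedSpace ℂ E]
    (ρ : ℝ) (f : (Fin d → ℂ) → E) : Prop where
  analyticOn : AnalyticOn ℂ f (StripO d ρ)
  continuousOn : ContinuousOn f (Strip d ρ)
  bounded : ∃ M : ℝ, ∀ z ∈ Strip d ρ, ‖f z‖ ≤ M

/-- The translation `T_ω : θ ↦ θ + ω`. -/
def shift {d : ℕ} (ω : Fin d → ℝ) (z : Fin d → ℂ) : Fin d → ℂ :=
  z + fun j => (ω j : ℂ)

/-- Average over the torus `T^d` of a function on the complexified torus. -/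
def torusAvg {d : ℕ} {E : Type*} [NormedAddCommGroup E] [NormedSpace ℝ E]
    (f : (Fin d → ℂ) → E) : E :=
  ∫ θ in Set.Icc (0 : Fin d → ℝ) 1, f (fun j => (θ j : ℂ))

/-- Entrywise average over `T^d` of a matrix-valued function. -/
def matAvg {d m n : ℕ} (F : (Fin d → ℂ) → Matrix (Fin m) (Fin n) ℂ) :
    Matrix (Fin m) (Fin n) ℂ :=
  Matrix.of fun i j => torusAvg fun θ => F θ i j

/-- The lift of an integer vector `k ∈ ℤ^d` to the phase space `ℂ^{2d} = ℂ^d × ℂ^d`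
(`k` in the angle components, `0` in the action components). -/
def liftZ {d : ℕ} (k : Fin d → ℤ) : Fin (d + d) → ℂ :=
  Fin.addCases (motive := fun _ => ℂ) (fun j => (k j : ℂ)) fun _ => 0

/-- Quasi-periodicity of an embedding `K : T^d → M = T^d × B` (written in the
universal cover). -/
def QuasiPeriodic {d : ℕ} (K : (Fin d → ℂ) → Fin (d + d) → ℂ) : Prop :=
  ∀ (z : Fin d → ℂ) (k : Fin d → ℤ), K (z + fun j => (k j : ℂ)) = K z + liftZ k

/-- Periodicity of a map of the phase space `M = T^d × B` (written in the
universal cover). -/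
def PhasePeriodic {d : ℕ} (f : (Fin (d + d) → ℂ) → Fin (d + d) → ℂ) : Prop :=
  ∀ (x : Fin (d + d) → ℂ) (k : Fin d → ℤ), f (x + liftZ k) = f x + liftZ k

/-! ### Jacobians as matrices -/

/-- `A` is the Jacobian matrix of `f` at `z`. -/
def hasJacobianAt {m n : ℕ} (f : (Fin n → ℂ) → Fin m → ℂ)
    (A : Matrix (Fin m) (Fin n) ℂ) (z : Fin n → ℂ) : Prop :=
  HasFDerivAt f (LinearMap.toContinuousLinearMap (Matrix.mulVecLin A)) z

/-- Real version: `A` is the Jacobian matrix of `f` at `z`. -/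
def hasJacobianAtR {m n : ℕ} (f : (Fin n → ℝ) → Fin m → ℝ)
    (A : Matrix (Fin m) (Fin n) ℝ) (z : Fin n → ℝ) : Prop :=
  HasFDerivAt f (LinearMap.toContinuousLinearMap (Matrix.mulVecLin A)) z

/-! ### Adapted frames -/

/-- The normalization matrix `N = (DK^⊤ DK)⁻¹`. -/
def nMat {d : ℕ} {R : Type*} [CommRing R] (DK : Matrix (Fin (d + d)) (Fin d) R) :
    Matrix (Fin d) (Fin d) R := (DKᵀ * DK)⁻¹

/-- The adapted frame `M = [DK | J⁻¹ DK N]`, where `Jx` is the value of the matrix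
representing the symplectic form at the relevant point. -/
def frameM {d : ℕ} {R : Type*} [CommRing R] (Jx : Matrix (Fin (d + d)) (Fin (d + d)) R)
    (DK : Matrix (Fin (d + d)) (Fin d) R) : Matrix (Fin (d + d)) (Fin (d + d)) R :=
  Matrix.reindex (Equiv.refl _) finSumFinEquiv
    (Matrix.fromCols DK (Jx⁻¹ * DK * nMat DK))

/-- First `d` rows of a `2d × n` matrix. -/
def rowsFst {d n : ℕ} {R : Type*} (A : Matrix (Fin (d + d)) (Fin n) R) :
    Matrix (Fin d) (Fin n) R := A.submatrix (Fin.castAdd d) id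

/-- Last `d` rows of a `2d × n` matrix. -/
def rowsSnd {d n : ℕ} {R : Type*} (A : Matrix (Fin (d + d)) (Fin n) R) :
    Matrix (Fin d) (Fin n) R := A.submatrix (Fin.natAdd d) id

/-- Entrywise sup norm of a matrix. -/
def matNorm {m n : Type*} {α : Type*} [SeminormedAddCommGroup α] (A : Matrix m n α) : ℝ :=
  ⨆ i, ⨆ j, ‖A i j‖

/-- Sup over the strip `T^d_ρ` of the entrywise norm of a matrix-valued function. -/
def matStripNorm {d m n : ℕ} (ρ : ℝ) (F : (Fin d → ℂ) → Matrix (Fin m) (Fin n) ℂ) : ℝ :=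
  ⨆ z : Strip d ρ, matNorm (F z.1)

/-- The matrix `S(θ)` appearing in the automatic reducibility:
`S(θ) = N(θ+ω)^⊤ DK(θ+ω)^⊤ (Df∘K)(θ) (J⁻¹∘K)(θ) DK(θ) N(θ)
  − λ N(θ+ω)^⊤ DK(θ+ω)^⊤ (J⁻¹∘K)(θ+ω) DK(θ+ω) N(θ+ω)`. -/
def SmatC {d : ℕ} (lam : ℂ) (ω : Fin d → ℝ)
    (J : (Fin (d + d) → ℂ) → Matrix (Fin (d + d)) (Fin (d + d)) ℂ)
    (K : (Fin d → ℂ) → Fin (d + d) → ℂ)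
    (DK : (Fin d → ℂ) → Matrix (Fin (d + d)) (Fin d) ℂ)
    (DfK : (Fin d → ℂ) → Matrix (Fin (d + d)) (Fin (d + d)) ℂ)
    (θ : Fin d → ℂ) : Matrix (Fin d) (Fin d) ℂ :=
  (nMat (DK (shift ω θ)))ᵀ * (DK (shift ω θ))ᵀ * DfK θ * (J (K θ))⁻¹ * DK θ * nMat (DK θ)
    - lam • ((nMat (DK (shift ω θ)))ᵀ * (DK (shift ω θ))ᵀ * (J (K (shift ω θ)))⁻¹ *
        DK (shift ω θ) * nMat (DK (shift ω θ)))

/-- The matrix `Ã(θ) = (M ∘ T_ω)(θ)⁻¹ (D_μ f ∘ K)(θ)`. -/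
def AtildeC {d : ℕ} (ω : Fin d → ℝ)
    (J : (Fin (d + d) → ℂ) → Matrix (Fin (d + d)) (Fin (d + d)) ℂ)
    (K : (Fin d → ℂ) → Fin (d + d) → ℂ)
    (DK : (Fin d → ℂ) → Matrix (Fin (d + d)) (Fin d) ℂ)
    (DmufK : (Fin d → ℂ) → Matrix (Fin (d + d)) (Fin d) ℂ)
    (θ : Fin d → ℂ) : Matrix (Fin (d + d)) (Fin d) ℂ :=
  (frameM (J (K (shift ω θ))) (DK (shift ω θ)))⁻¹ * DmufK θ

/-- The non-degeneracy condition: there exists a zero-average solution `B_b` of the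
cohomology equation `λ B_b − B_b ∘ T_ω = −(Ã₂)⁰` such that the `2d × 2d` matrix
`[[avg S, avg (S B_b⁰) + avg Ã₁],[(λ−1) Id, avg Ã₂]]` has nonzero determinant. -/
def HNDat {d : ℕ} (lam : ℂ) (ω : Fin d → ℝ)
    (S A1 A2 : (Fin d → ℂ) → Matrix (Fin d) (Fin d) ℂ) : Prop :=
  ∃ Bb : (Fin d → ℂ) → Matrix (Fin d) (Fin d) ℂ,
    matAvg Bb = 0 ∧
    (∀ θ : Fin d → ℝ,
      lam • Bb (fun j => (θ j : ℂ)) - Bb (shift ω fun j => (θ j : ℂ))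
        = -(A2 (fun j => (θ j : ℂ)) - matAvg A2)) ∧
    (Matrix.fromBlocks (matAvg S) (matAvg (fun θ => S θ * Bb θ) + matAvg A1)
      ((lam - 1) • (1 : Matrix (Fin d) (Fin d) ℂ)) (matAvg A2)).det ≠ 0

/-- The non-degeneracy condition together with the bound `T` on the norm of the
inverse of the non-degeneracy matrix (the twist constant). -/
def H3twist {d : ℕ} (lam : ℂ) (ω : Fin d → ℝ) (TT : ℝ)
    (S A1 A2 : (Fin d → ℂ) → Matrix (Fin d) (Fin d) ℂ) : Prop :=
  ∃ Bb : (Fin d → ℂ) → Matrix (Fin d) (Fin d) ℂ,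
    matAvg Bb = 0 ∧
    (∀ θ : Fin d → ℝ,
      lam • Bb (fun j => (θ j : ℂ)) - Bb (shift ω fun j => (θ j : ℂ))
        = -(A2 (fun j => (θ j : ℂ)) - matAvg A2)) ∧
    (Matrix.fromBlocks (matAvg S) (matAvg (fun θ => S θ * Bb θ) + matAvg A1)
      ((lam - 1) • (1 : Matrix (Fin d) (Fin d) ℂ)) (matAvg A2)).det ≠ 0 ∧
    matNorm (Matrix.fromBlocks (matAvg S) (matAvg (fun θ => S θ * Bb θ) + matAvg A1)
      ((lam - 1) • (1 : Matrix (Fin d) (Fin d) ℂ)) (matAvg A2))⁻¹ ≤ TT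

/-- The normalization condition for `K` with respect to the reference embedding `K0`:
`∫_{T^d} [M(θ)⁻¹ (K(θ) − K0(θ))]₁ dθ = 0`. -/
def NormalizedWrt {d : ℕ}
    (J : (Fin (d + d) → ℂ) → Matrix (Fin (d + d)) (Fin (d + d)) ℂ)
    (K0 : (Fin d → ℂ) → Fin (d + d) → ℂ)
    (DK0 : (Fin d → ℂ) → Matrix (Fin (d + d)) (Fin d) ℂ)
    (K : (Fin d → ℂ) → Fin (d + d) → ℂ) : Prop :=
  ∀ i : Fin d,
    torusAvg (fun θ =>
      ((frameM (J (K0 θ)) (DK0 θ))⁻¹.mulVec (K θ - K0 θ)) (Fin.castAdd d i)) = 0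

/-! ### Symplectic structure and conformally symplectic families -/

/-- `J` represents an exact analytic symplectic form on `M = T^d × B`. -/
structure SympForm {d : ℕ}
    (J : (Fin (d + d) → ℂ) → Matrix (Fin (d + d)) (Fin (d + d)) ℂ) : Prop where
  antisymm : ∀ x, (J x)ᵀ = -J x
  nondeg : ∀ x, IsUnit (J x).det
  analytic : ∀ i j, AnalyticOnNhd ℂ (fun x => J x i j) Set.univ
  periodic : ∀ (x : Fin (d + d) → ℂ) (k : Fin d → ℤ), J (x + liftZ k) = J x
  exact' : ∃ (a : (Fin (d + d) → ℂ) → Fin (d + d) → ℂ)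
      (Da : (Fin (d + d) → ℂ) → Matrix (Fin (d + d)) (Fin (d + d)) ℂ),
      (∀ x, hasJacobianAt a (Da x) x) ∧ ∀ x, J x = (Da x)ᵀ - Da x

/-- The data of an analytic family `f_{μ,ε}` of maps of `M = T^d × B`, together with
its Jacobian `Df` in the phase-space variable, its derivative `Dμf` with respect to
the drift parameter `μ`, and the conformal factor `λ(ε)`. -/
structure ConfFamily (d : ℕ) where
  f : (Fin d → ℂ) → ℂ → (Fin (d + d) → ℂ) → Fin (d + d) → ℂ
  Df : (Fin d → ℂ) → ℂ → (Fin (d + d) → ℂ) → Matrix (Fin (d + d)) (Fin (d + d)) ℂ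
  Dmuf : (Fin d → ℂ) → ℂ → (Fin (d + d) → ℂ) → Matrix (Fin (d + d)) (Fin d) ℂ
  lam : ℂ → ℂ

/-- `F` is an analytic family of conformally symplectic maps (`f_{μ,ε}^* Ω = λ(ε) Ω`)
for `μ` in the open set `Γ`. -/
structure IsConfFamily {d : ℕ} (F : ConfFamily d)
    (J : (Fin (d + d) → ℂ) → Matrix (Fin (d + d)) (Fin (d + d)) ℂ)
    (Γ : Set (Fin d → ℂ)) : Prop where
  analytic : AnalyticOn ℂ
    (fun p : (Fin d → ℂ) × ℂ × (Fin (d + d) → ℂ) => F.f p.1 p.2.1 p.2.2)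
    {p : (Fin d → ℂ) × ℂ × (Fin (d + d) → ℂ) | p.1 ∈ Γ}
  jac_x : ∀ μ ∈ Γ, ∀ (ε : ℂ) (x : Fin (d + d) → ℂ),
    hasJacobianAt (F.f μ ε) (F.Df μ ε x) x
  jac_mu : ∀ μ ∈ Γ, ∀ (ε : ℂ) (x : Fin (d + d) → ℂ),
    HasFDerivAt (fun μ' => F.f μ' ε x)
      (LinearMap.toContinuousLinearMap (Matrix.mulVecLin (F.Dmuf μ ε x))) μ
  conf : ∀ μ ∈ Γ, ∀ (ε : ℂ) (x : Fin (d + d) → ℂ),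
    (F.Df μ ε x)ᵀ * J (F.f μ ε x) * F.Df μ ε x = F.lam ε • J x
  periodic : ∀ μ ∈ Γ, ∀ ε : ℂ, PhasePeriodic (F.f μ ε)

/-- Hypothesis Hλ: the conformal factor is analytic near `0`, `λ(0)=1` and
`λ(ε) − 1 = α ε^a + O(|ε|^{a+1})` with `a ≥ 1` an integer and `α ≠ 0`. -/
def Hlambda (lam : ℂ → ℂ) (a : ℕ) (α : ℂ) : Prop :=
  AnalyticAt ℂ lam 0 ∧ lam 0 = 1 ∧ 1 ≤ a ∧ α ≠ 0 ∧
    (fun ε => lam ε - 1 - α * ε ^ a) =O[nhds (0 : ℂ)] fun ε => ε ^ (a + 1)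

/-! ### The sets Λ, Υ, G -/

/-- `Λ(A; ω, τ, N) = {λ ∈ ℂ : ν(λ;ω,τ) |λ−1|^{N+1} ≤ A}`. -/
def LambdaSet {d : ℕ} (ω : Fin d → ℝ) (τ : ℝ) (N : ℕ) (A : ℝ) : Set ℂ :=
  {lam | nuC ω τ lam * ENNReal.ofReal (‖lam - 1‖ ^ (N + 1)) ≤ ENNReal.ofReal A}

/-- `Υ(A; ω, τ) = {λ ∈ ℂ : ν(λ;ω,τ) ≤ A}`. -/
def Upsilon {d : ℕ} (ω : Fin d → ℝ) (τ : ℝ) (A : ℝ) : Set ℂ :=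
  {lam | nuC ω τ lam ≤ ENNReal.ofReal A}

/-- `G(A; ω, τ, N) = {ε ∈ ℂ : ν(λ(ε);ω,τ) |λ(ε)−1|^{N+1} ≤ A}`. -/
def Gset {d : ℕ} (lam : ℂ → ℂ) (ω : Fin d → ℝ) (τ : ℝ) (N : ℕ) (A : ℝ) : Set ℂ :=
  {ε | nuC ω τ (lam ε) * ENNReal.ofReal (‖lam ε - 1‖ ^ (N + 1)) ≤ ENNReal.ofReal A}

/-- `G_{r₀}(A; ω, τ, N) = G(A; ω, τ, N) ∩ {|ε| ≤ r₀}`. -/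
def GsetR {d : ℕ} (lam : ℂ → ℂ) (ω : Fin d → ℝ) (τ : ℝ) (N : ℕ) (A r0 : ℝ) : Set ℂ :=
  Gset lam ω τ N A ∩ Metric.closedBall 0 r0

/-- `z0` is `m`-tangentially accessible from both sides in the set `C`. -/
def TangAccessBoth (C : Set ℂ) (m : ℕ) (z0 : ℂ) : Prop :=
  ∃ u : ℂ, ‖u‖ = 1 ∧ ∃ δ > (0 : ℝ), ∃ γ > (0 : ℝ),
    ∀ t s : ℝ, |t| < δ → |s| < δ → γ * |t| ^ m ≤ |s| →
      z0 + (t : ℂ) * u + (s : ℂ) * (starRingEnd ℂ) u ∈ C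

/-! ### Whitney differentiability -/

/-- `C^p`-Whitney differentiability of `h : D → E` (`D ⊆ ℂ`), with respect to a given
"norm" `nrm` on `E`, with (complex, one-dimensional) Whitney derivatives of order `≤ ℓ`,
`ℓ < p ≤ ℓ + 1`. -/
def WhitneyCp {E : Type*} [AddCommGroup E] [Module ℂ E] (nrm : E → ℝ)
    (D : Set ℂ) (h : ℂ → E) (ℓ : ℕ) (p : ℝ) : Prop :=
  ∃ M : ℝ, ∃ H : ℕ → ℂ → E,
    (∀ x ∈ D, H 0 x = h x) ∧
    (∀ k ≤ ℓ, ∀ x ∈ D, nrm (H k x) ≤ M) ∧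
    (∀ k ≤ ℓ, ∀ x ∈ D, ∀ ε > (0 : ℝ), ∃ δ > (0 : ℝ), ∀ y ∈ D, ‖y - x‖ < δ →
      nrm (H k y - H k x) < ε) ∧
    ∀ k ≤ ℓ, ∀ x ∈ D, ∀ y ∈ D,
      nrm (H k y - ∑ j ∈ Finset.range (ℓ - k + 1),
          ((j.factorial : ℂ)⁻¹ * (y - x) ^ j) • H (j + k) x)
        ≤ M * ‖y - x‖ ^ (p - k)

/-- `C^∞`-Whitney differentiability. -/
def WhitneyCinf {E : Type*} [AddCommGroup E] [Module ℂ E] (nrm : E → ℝ)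
    (D : Set ℂ) (h : ℂ → E) : Prop :=
  ∀ (ℓ : ℕ) (p : ℝ), (ℓ : ℝ) < p → p ≤ ℓ + 1 → WhitneyCp nrm D h ℓ p

/-! ### The standing hypotheses of the main theorem (maps) -/

/-- The data of the main theorem: a Diophantine frequency, an exact symplectic
structure, an analytic family of conformally symplectic maps with conformal factor
`λ(ε) = 1 + α ε^a + O(ε^{a+1})`, and a Lagrangian invariant torus `K0` for the
symplectic map `f_{μ0,0}`. -/
structure MainSetup (d : ℕ) where
  τ : ℝ
  ρ : ℝ
  ω : Fin d → ℝ
  J : (Fin (d + d) → ℂ) → Matrix (Fin (d + d)) (Fin (d + d)) ℂ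
  F : ConfFamily d
  Γ : Set (Fin d → ℂ)
  a : ℕ
  α : ℂ
  μ0 : Fin d → ℂ
  K0 : (Fin d → ℂ) → Fin (d + d) → ℂ
  DK0 : (Fin d → ℂ) → Matrix (Fin (d + d)) (Fin d) ℂ

/-- The hypotheses of the main theorem. -/
structure MainHyps {d : ℕ} (S : MainSetup d) : Prop where
  hd : 0 < d
  hτ : 0 < S.τ
  hρ : 0 < S.ρ
  hdio : IsDiophantine S.ω S.τ
  hJ : SympForm S.J
  hΓopen : IsOpen S.Γ
  hμ0 : S.μ0 ∈ S.Γ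
  hF : IsConfFamily S.F S.J S.Γ
  hlam : Hlambda S.F.lam S.a S.α
  hK0A : MemA S.ρ S.K0
  hK0per : QuasiPeriodic S.K0
  hDK0 : ∀ θ ∈ StripO d S.ρ, hasJacobianAt S.K0 (S.DK0 θ) θ
  hLag : ∀ θ ∈ StripO d S.ρ, (S.DK0 θ)ᵀ * S.J (S.K0 θ) * S.DK0 θ = 0
  hinv : ∀ θ ∈ Strip d S.ρ, S.F.f S.μ0 0 (S.K0 θ) = S.K0 (shift S.ω θ)
  hHND : HNDat 1 S.ω
    (SmatC 1 S.ω S.J S.K0 S.DK0 fun θ => S.F.Df S.μ0 0 (S.K0 θ))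
    (fun θ => rowsFst (AtildeC S.ω S.J S.K0 S.DK0 (fun θ' => S.F.Dmuf S.μ0 0 (S.K0 θ')) θ))
    (fun θ => rowsSnd (AtildeC S.ω S.J S.K0 S.DK0 (fun θ' => S.F.Dmuf S.μ0 0 (S.K0 θ')) θ))

end KAM
namespace KAM

/-!
A point `λ ∉ Λ(A;ω,τ,N)` has a resonance `k ≠ 0` with
`A |e^{2πik·ω} − λ| < |k|^{-τ} |λ − 1|^{N+1}`. As `|e^{2πik·ω}| = 1`, such a `λ` lies within
`|λ − 1|^{N+1}/A` of the unit circle, so inside `B(1,r)` the complement of `Λ` is contained in a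
rectangle of area `O(r^{N+2} + r^3) = o(r^2)`.
On the circle, `λ = e^{2πix}` with `|x| < r`, and the resonance puts `x` within
`O(r^{N+1} |k|^{-τ})` of `k·ω` modulo `1`; as `∑_{k ≠ 0} |k|^{-τ} < ∞` for `τ > d`, the bad
parameters have length `O(r^{N+1}) = o(r)`.
-/

open scoped Topology

lemma tendsto_measure_inter_div_of_tendsto_measure_diff_div {α ι : Type*} [MeasurableSpace α]
    {μ : Measure α} {l : Filter ι} {s : Set α} {B : ι → Set α}
    (hB : ∀ᶠ i in l, μ (B i) ≠ 0 ∧ μ (B i) ≠ ∞)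
    (h : Tendsto (fun i => μ (B i \ s) / μ (B i)) l (𝓝 0)) :
    Tendsto (fun i => μ (s ∩ B i) / μ (B i)) l (𝓝 1) := by
  refine tendsto_of_tendsto_of_tendsto_of_le_of_le' (g := fun i => 1 - μ (B i \ s) / μ (B i))
    (by simpa using ENNReal.Tendsto.sub tendsto_const_nhds h (Or.inl ENNReal.one_ne_top))
    tendsto_const_nhds ?_ (Eventually.of_forall fun i => ?_)
  · filter_upwards [hB] with i ⟨h0, htop⟩
    rw [tsub_le_iff_right, ← ENNReal.add_div, ← ENNReal.div_self h0 htop, Set.inter_comm]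
    gcongr
    exact measure_le_inter_add_sdiff μ (B i) s
  · exact ENNReal.div_le_of_le_mul (by rw [one_mul]; exact measure_mono Set.inter_subset_right)

lemma tendsto_zero_of_le_ofReal {ι : Type*} {l : Filter ι} {f : ι → ℝ≥0∞} {g : ι → ℝ}
    (hfg : ∀ᶠ i in l, f i ≤ ENNReal.ofReal (g i)) (hg : Tendsto g l (𝓝 0)) :
    Tendsto f l (𝓝 0) := by
  refine tendsto_of_tendsto_of_tendsto_of_le_of_le' tendsto_const_nhds ?_
    (Eventually.of_forall fun _ => zero_le) hfg
  simpa using ENNReal.tendsto_ofReal hg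

lemma _root_.Complex.volume_reProdIm (s t : Set ℝ) : volume (s ×ℂ t) = volume s * volume t := by
  change volume (Complex.measurableEquivRealProd ⁻¹' (s ×ˢ t)) = _
  rw [Complex.volume_preserving_equiv_real_prod.measure_preimage_equiv, Measure.volume_eq_prod,
    Measure.prod_prod]

lemma _root_.Complex.volume_ball_eq_ofReal (a : ℂ) {r : ℝ} (hr : 0 ≤ r) :
    volume (Metric.ball a r) = ENNReal.ofReal (π * r ^ 2) := by
  rw [Complex.volume_ball, ← ENNReal.ofReal_pow hr, ← ENNReal.ofReal_coe_nnreal,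
    ← ENNReal.ofReal_mul (by positivity), mul_comm, NNReal.coe_real_pi]

lemma _root_.ENNReal.tsum_fin_pi_prod {α : Type*} (h : α → ℝ≥0∞) (d : ℕ) :
    ∑' k : Fin d → α, ∏ j, h (k j) = (∑' a, h a) ^ d := by
  induction d with
  | zero => simp [tsum_fintype]
  | succ d ih =>
    rw [← (Fin.consEquiv fun _ => α).tsum_eq, ENNReal.tsum_prod']
    simp only [Fin.consEquiv_apply, Fin.prod_univ_succ, Fin.cons_zero, Fin.cons_succ,
      ENNReal.tsum_mul_left, ENNReal.tsum_mul_right, ih, pow_succ']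

lemma summable_one_add_abs_int_rpow_neg {σ : ℝ} (hσ : 1 < σ) :
    Summable fun n : ℤ => (1 + |(n : ℝ)|) ^ (-σ) := by
  refine (Real.summable_abs_int_rpow hσ).of_norm_bounded_eventually ?_
  filter_upwards [(Set.finite_singleton (0 : ℤ)).compl_mem_cofinite] with n hn
  have hn : (0 : ℝ) < |(n : ℝ)| := by simpa using hn
  rw [Real.norm_of_nonneg (by positivity)]
  exact Real.rpow_le_rpow_of_nonpos hn (by linarith) (by linarith)

section Circle

open Complex

lemma norm_exp_two_pi_I_mul_sub_one_le (x : ℝ) :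
    ‖exp (2 * π * I * x) - 1‖ ≤ 2 * π * |x| := by
  have h := Real.norm_exp_I_mul_ofReal_sub_one_le (x := 2 * π * x)
  rw [Real.norm_eq_abs, abs_mul, abs_of_pos Real.two_pi_pos] at h
  convert h using 4
  push_cast
  ring

/-- Jordan's inequality, read on the circle `ℝ/ℤ`. -/
lemma four_mul_norm_coe_le_norm_exp_two_pi_I_mul_sub_one (u : ℝ) :
    4 * ‖(u : UnitAddCircle)‖ ≤ ‖exp (2 * π * I * u) - 1‖ := by
  set v := u - round u
  have hexp : exp (2 * π * I * u) = exp (I * ↑(2 * π * v)) := by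
    rw [show 2 * π * I * u = I * ↑(2 * π * v) + round u * (2 * π * I) by
      push_cast [v]; ring, exp_add, exp_int_mul_two_pi_mul_I, mul_one]
  have hv : |π * v| ≤ π / 2 := by
    rw [abs_mul, abs_of_pos Real.pi_pos]
    nlinarith [abs_sub_round u, Real.pi_pos]
  have hjordan := Real.mul_abs_le_abs_sin hv
  rw [abs_mul, abs_of_pos Real.pi_pos] at hjordan
  rw [UnitAddCircle.norm_eq, hexp, norm_exp_I_mul_ofReal_sub_one, norm_mul,
    show 2 * π * v / 2 = π * v by ring, Real.norm_eq_abs, Real.norm_eq_abs]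
  field_simp at hjordan
  norm_num
  linarith

end Circle

section Frequencies

variable {d : ℕ}

lemma one_le_intNorm {k : Fin d → ℤ} (hk : k ≠ 0) : 1 ≤ intNorm k := by
  obtain ⟨j, hj⟩ := Function.ne_iff.mp hk
  calc (1 : ℝ) ≤ |(k j : ℝ)| := by exact_mod_cast Int.one_le_abs hj
    _ ≤ intNorm k := Finset.single_le_sum (f := fun i => |(k i : ℝ)|)
      (fun i _ => abs_nonneg _) (Finset.mem_univ j)

lemma intNorm_pos {k : Fin d → ℤ} (hk : k ≠ 0) : 0 < intNorm k :=
  one_pos.trans_le (one_le_intNorm hk)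

lemma rpow_neg_intNorm_le (hd : 0 < d) {τ : ℝ} (hτ : 0 ≤ τ) {k : Fin d → ℤ} (hk : k ≠ 0) :
    intNorm k ^ (-τ) ≤ 2 ^ τ * ∏ j, (1 + |(k j : ℝ)|) ^ (-(τ / d)) := by
  have hn := one_le_intNorm hk
  have hprod : ∏ j, (1 + |(k j : ℝ)|) ≤ (2 * intNorm k) ^ d := by
    calc ∏ j, (1 + |(k j : ℝ)|) ≤ ∏ _j : Fin d, 2 * intNorm k := by
          refine Finset.prod_le_prod (fun j _ => by positivity) fun j _ => ?_
          have hj := Finset.single_le_sum (f := fun i => |(k i : ℝ)|) (fun i _ => abs_nonneg _)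
            (Finset.mem_univ j)
          linarith [show intNorm k = ∑ i, |(k i : ℝ)| from rfl]
      _ = (2 * intNorm k) ^ d := by simp
  have hpow : ((2 * intNorm k) ^ d) ^ (-(τ / d)) = 2 ^ (-τ) * intNorm k ^ (-τ) := by
    rw [← Real.rpow_natCast, ← Real.rpow_mul (by positivity), Real.mul_rpow (by norm_num)
      (by positivity)]
    congr 2 <;> field_simp
  calc intNorm k ^ (-τ) = 2 ^ τ * ((2 * intNorm k) ^ d) ^ (-(τ / d)) := by
        rw [hpow, ← mul_assoc, ← Real.rpow_add two_pos, add_neg_cancel, Real.rpow_zero, one_mul]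
    _ ≤ 2 ^ τ * (∏ j, (1 + |(k j : ℝ)|)) ^ (-(τ / d)) :=
        mul_le_mul_of_nonneg_left (Real.rpow_le_rpow_of_nonpos
          (Finset.prod_pos fun j _ => by positivity) hprod (neg_nonpos.mpr (by positivity)))
          (by positivity)
    _ = 2 ^ τ * ∏ j, (1 + |(k j : ℝ)|) ^ (-(τ / d)) := by
        rw [Real.finsetProd_rpow _ _ fun j _ => by positivity]

/-- `|k|^{-τ}` is bounded by a product of one-dimensional terms `(1 + |k_j|)^{-τ/d}`,
each summable over `ℤ` since `τ/d > 1`. -/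
lemma tsum_rpow_neg_intNorm_ne_top {τ : ℝ} (hτ : (d : ℝ) < τ) :
    ∑' k : {k : Fin d → ℤ // k ≠ 0}, ENNReal.ofReal (intNorm k.1 ^ (-τ)) ≠ ∞ := by
  rcases Nat.eq_zero_or_pos d with rfl | hd
  · have : IsEmpty {k : Fin 0 → ℤ // k ≠ 0} := ⟨fun k => k.2 (Subsingleton.elim _ _)⟩
    simp
  have hσ : 1 < τ / d := (one_lt_div (by exact_mod_cast hd)).mpr hτ
  let F : (Fin d → ℤ) → ℝ≥0∞ := fun k => ∏ j, ENNReal.ofReal ((1 + |(k j : ℝ)|) ^ (-(τ / d)))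
  have hF : ∑' k, F k ≠ ∞ := by
    simp only [F]
    rw [ENNReal.tsum_fin_pi_prod (fun n : ℤ => ENNReal.ofReal ((1 + |(n : ℝ)|) ^ (-(τ / d)))),
      ← ENNReal.ofReal_tsum_of_nonneg (fun n => by positivity)
      (summable_one_add_abs_int_rpow_neg hσ)]
    exact ENNReal.pow_ne_top ENNReal.ofReal_ne_top
  refine ne_top_of_le_ne_top (ENNReal.mul_ne_top (ENNReal.ofReal_ne_top (r := 2 ^ τ)) hF) ?_
  calc ∑' k : {k : Fin d → ℤ // k ≠ 0}, ENNReal.ofReal (intNorm k.1 ^ (-τ))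
      ≤ ∑' k : {k : Fin d → ℤ // k ≠ 0}, ENNReal.ofReal (2 ^ τ) * F k := by
        refine ENNReal.tsum_le_tsum fun k => ?_
        dsimp only [F]
        rw [← ENNReal.ofReal_prod_of_nonneg fun j _ => by positivity,
          ← ENNReal.ofReal_mul (by positivity)]
        exact ENNReal.ofReal_le_ofReal (rpow_neg_intNorm_le hd (by linarith) k.2)
    _ ≤ ENNReal.ofReal (2 ^ τ) * ∑' k, F k := by
        rw [ENNReal.tsum_mul_left]
        gcongr
        exact ENNReal.tsum_comp_le_tsum_of_injective Subtype.val_injective F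

variable (k : Fin d → ℤ) (ω : Fin d → ℝ)

lemma norm_eDot : ‖eDot k ω‖ = 1 := by
  rw [eDot, show 2 * π * Complex.I * (intDot k ω : ℂ) = ↑(2 * π * intDot k ω) * Complex.I by
    push_cast; ring]
  exact Complex.norm_exp_ofReal_mul_I _

open Complex in
lemma norm_eDot_sub_exp (x : ℝ) :
    ‖eDot k ω - exp (2 * π * I * x)‖ = ‖exp (2 * π * I * ↑(intDot k ω - x)) - 1‖ := by
  have h : eDot k ω - exp (2 * π * I * x) =
      exp (2 * π * I * x) * (exp (2 * π * I * ↑(intDot k ω - x)) - 1) := by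
    rw [mul_sub, mul_one, ← exp_add, eDot]
    push_cast
    ring_nf
  rw [h, norm_mul, show 2 * π * I * x = ↑(2 * π * x) * I by push_cast; ring,
    norm_exp_ofReal_mul_I, one_mul]

end Frequencies

section LambdaSet

variable {d : ℕ} {ω : Fin d → ℝ} {τ : ℝ} {N : ℕ} {A : ℝ}

lemma exists_lt_of_notMem_LambdaSet {lam : ℂ} (h : lam ∉ LambdaSet ω τ N A) :
    ∃ k : Fin d → ℤ, k ≠ 0 ∧
      A * ‖eDot k ω - lam‖ < intNorm k ^ (-τ) * ‖lam - 1‖ ^ (N + 1) := by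
  by_contra! hle
  apply h
  rw [LambdaSet, Set.mem_ofPred_eq, nuC, ENNReal.iSup_mul]
  refine iSup_le fun k => ?_
  have hpow : 0 ≤ intNorm k.1 ^ (-τ) := (Real.rpow_pos_of_pos (intNorm_pos k.2) _).le
  rw [ENNReal.ofReal_rpow_of_pos (intNorm_pos k.2), mul_assoc, ← ENNReal.ofReal_mul hpow,
    mul_comm, ← div_eq_mul_inv]
  refine ENNReal.div_le_of_le_mul ?_
  rw [← ENNReal.ofReal_mul' (norm_nonneg _)]
  exact ENNReal.ofReal_le_ofReal (hle k.1 k.2)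

lemma mul_abs_norm_sub_one_lt_of_notMem_LambdaSet {z : ℂ} (hτ : 0 ≤ τ) (hA : 0 ≤ A)
    (h : z ∉ LambdaSet ω τ N A) : A * |‖z‖ - 1| < ‖z - 1‖ ^ (N + 1) := by
  obtain ⟨k, hk, hlt⟩ := exists_lt_of_notMem_LambdaSet h
  have hdist : |‖z‖ - 1| ≤ ‖eDot k ω - z‖ := by
    simpa [norm_eDot, abs_sub_comm] using abs_norm_sub_norm_le (eDot k ω) z
  have hpow : intNorm k ^ (-τ) ≤ 1 :=
    Real.rpow_le_one_of_one_le_of_nonpos (one_le_intNorm hk) (neg_nonpos.mpr hτ)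
  calc A * |‖z‖ - 1| ≤ A * ‖eDot k ω - z‖ := by gcongr
    _ < intNorm k ^ (-τ) * ‖z - 1‖ ^ (N + 1) := hlt
    _ ≤ ‖z - 1‖ ^ (N + 1) := mul_le_of_le_one_left (by positivity) hpow

lemma abs_re_sub_one_le {z : ℂ} (hz : ‖z - 1‖ ≤ 1) :
    |z.re - 1| ≤ 3 * |‖z‖ - 1| + z.im ^ 2 := by
  have hre : |z.re - 1| ≤ 1 := by simpa using (Complex.abs_re_le_norm (z - 1)).trans hz
  have hnorm : ‖z‖ ≤ 2 := by
    calc ‖z‖ = ‖(z - 1) + 1‖ := by ring_nf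
      _ ≤ ‖z - 1‖ + 1 := by simpa using norm_add_le (z - 1) 1
      _ ≤ 2 := by linarith
  have hsq : ‖z‖ ^ 2 = z.re ^ 2 + z.im ^ 2 := by
    rw [Complex.sq_norm, Complex.normSq_apply]; ring
  have hx : 0 ≤ z.re := by linarith [neg_abs_le (z.re - 1)]
  calc |z.re - 1| ≤ |z.re - 1| * (z.re + 1) :=
        le_mul_of_one_le_right (abs_nonneg _) (by linarith)
    _ = |(‖z‖ - 1) * (‖z‖ + 1) - z.im ^ 2| := by
        rw [← abs_of_nonneg (by linarith : 0 ≤ z.re + 1), ← abs_mul]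
        congr 1
        linear_combination -hsq
    _ ≤ |‖z‖ - 1| * (‖z‖ + 1) + z.im ^ 2 := by
        refine (abs_sub _ _).trans ?_
        rw [abs_mul, abs_of_nonneg (by positivity : 0 ≤ ‖z‖ + 1), abs_of_nonneg (sq_nonneg z.im)]
    _ ≤ 3 * |‖z‖ - 1| + z.im ^ 2 := by nlinarith [abs_nonneg (‖z‖ - 1)]

lemma ball_diff_LambdaSet_subset {r : ℝ} (hτ : 0 ≤ τ) (hA : 0 < A) (hr : r ≤ 1) :
    Metric.ball (1 : ℂ) r \ LambdaSet ω τ N A ⊆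
      Set.Icc (1 - (3 * r ^ (N + 1) / A + r ^ 2)) (1 + (3 * r ^ (N + 1) / A + r ^ 2)) ×ℂ
        Set.Icc (-r) r := by
  rintro z ⟨hball, hz⟩
  have hzr : ‖z - 1‖ < r := by simpa [Complex.dist_eq] using hball
  have him : |z.im| ≤ r := by simpa using (Complex.abs_im_le_norm (z - 1)).trans hzr.le
  have him2 : z.im ^ 2 ≤ r ^ 2 := by
    rw [← sq_abs]; exact pow_le_pow_left₀ (abs_nonneg _) him 2
  have hcirc : 3 * |‖z‖ - 1| ≤ 3 * r ^ (N + 1) / A := by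
    rw [mul_div_assoc]
    gcongr
    rw [le_div_iff₀ hA, mul_comm]
    exact (mul_abs_norm_sub_one_lt_of_notMem_LambdaSet hτ hA.le hz).le.trans
      (pow_le_pow_left₀ (norm_nonneg _) hzr.le _)
  have hre := abs_re_sub_one_le (hzr.le.trans hr)
  obtain ⟨hre_lo, hre_hi⟩ :=
    abs_le.mp (hre.trans (by linarith : _ ≤ 3 * r ^ (N + 1) / A + r ^ 2))
  exact ⟨Set.mem_Icc.mpr ⟨by linarith, by linarith⟩, Set.mem_Icc.mpr (abs_le.mp him)⟩

theorem tendsto_volume_LambdaSet_inter_ball_div (hτ : 0 ≤ τ) (hN : 1 ≤ N) (hA : 0 < A) :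
    Tendsto (fun r : ℝ =>
        volume (LambdaSet ω τ N A ∩ Metric.ball (1 : ℂ) r) / volume (Metric.ball (1 : ℂ) r))
      (𝓝[>] 0) (𝓝 1) := by
  have hsmall : Set.Ioc (0 : ℝ) 1 ∈ 𝓝[>] 0 := Ioc_mem_nhdsGT one_pos
  refine tendsto_measure_inter_div_of_tendsto_measure_diff_div ?_ ?_
  · filter_upwards [hsmall] with r ⟨hr, _⟩
    rw [Complex.volume_ball_eq_ofReal 1 hr.le]
    exact ⟨by simp; positivity, ENNReal.ofReal_ne_top⟩
  refine tendsto_zero_of_le_ofReal (g := fun r => 4 * (3 * r ^ N / A + r) / π) ?_ ?_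
  · filter_upwards [hsmall] with r ⟨hr, hr1⟩
    rw [Complex.volume_ball_eq_ofReal 1 hr.le]
    calc volume (Metric.ball (1 : ℂ) r \ LambdaSet ω τ N A) / ENNReal.ofReal (π * r ^ 2)
        ≤ ENNReal.ofReal (2 * (3 * r ^ (N + 1) / A + r ^ 2) * (2 * r)) /
            ENNReal.ofReal (π * r ^ 2) := by
          gcongr
          refine (measure_mono (ball_diff_LambdaSet_subset hτ hA hr1)).trans_eq ?_
          have hc : 0 ≤ 3 * r ^ (N + 1) / A + r ^ 2 := by positivity
          rw [Complex.volume_reProdIm, Real.volume_Icc, Real.volume_Icc,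
            ← ENNReal.ofReal_mul (by linarith)]
          ring_nf
      _ = ENNReal.ofReal (4 * (3 * r ^ N / A + r) / π) := by
          rw [← ENNReal.ofReal_div_of_pos (by positivity)]
          congr 1
          field_simp
          ring
  · have hcont : Continuous fun r : ℝ => 4 * (3 * r ^ N / A + r) / π := by fun_prop
    simpa [zero_pow (by omega : N ≠ 0)] using hcont.tendsto 0 |>.mono_left nhdsWithin_le_nhds

open Complex in
lemma exists_dist_le_of_exp_notMem_LambdaSet {r x : ℝ} (hA : 0 < A) (hx : |x| ≤ r)
    (h : exp (2 * π * I * x) ∉ LambdaSet ω τ N A) :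
    ∃ k : Fin d → ℤ, k ≠ 0 ∧ dist (x : UnitAddCircle) (intDot k ω) ≤
      (2 * π * r) ^ (N + 1) * intNorm k ^ (-τ) / (4 * A) := by
  obtain ⟨k, hk, hlt⟩ := exists_lt_of_notMem_LambdaSet h
  refine ⟨k, hk, ?_⟩
  have hdist : 4 * dist (x : UnitAddCircle) (intDot k ω) ≤
      ‖eDot k ω - exp (2 * π * I * x)‖ := by
    rw [norm_eDot_sub_exp, dist_comm, dist_eq_norm, ← AddCircle.coe_sub]
    exact four_mul_norm_coe_le_norm_exp_two_pi_I_mul_sub_one _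
  have hlam : ‖exp (2 * π * I * x) - 1‖ ^ (N + 1) ≤ (2 * π * r) ^ (N + 1) := by
    refine pow_le_pow_left₀ (norm_nonneg _) ((norm_exp_two_pi_I_mul_sub_one_le x).trans ?_) _
    gcongr
  rw [le_div_iff₀ (by positivity)]
  calc dist (x : UnitAddCircle) (intDot k ω) * (4 * A)
      ≤ A * ‖eDot k ω - exp (2 * π * I * x)‖ := by nlinarith
    _ ≤ intNorm k ^ (-τ) * ‖exp (2 * π * I * x) - 1‖ ^ (N + 1) := hlt.le
    _ ≤ (2 * π * r) ^ (N + 1) * intNorm k ^ (-τ) := by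
        rw [mul_comm]
        exact mul_le_mul_of_nonneg_right hlam (Real.rpow_pos_of_pos (intNorm_pos hk) _).le

/-- A window of length at most `1` injects into `ℝ/ℤ`, where the ball of radius `ρ` around
`k·ω` has measure at most `2ρ`. -/
lemma volume_exp_notMem_LambdaSet_le {r : ℝ} (hA : 0 < A) (hr : r ≤ 1 / 2) :
    volume {x ∈ Set.Ioo (-r) r | Complex.exp (2 * π * Complex.I * x) ∉ LambdaSet ω τ N A} ≤
      ENNReal.ofReal ((2 * π * r) ^ (N + 1) / (2 * A)) *
        ∑' k : {k : Fin d → ℤ // k ≠ 0}, ENNReal.ofReal (intNorm k.1 ^ (-τ)) := by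
  set ρ : {k : Fin d → ℤ // k ≠ 0} → ℝ := fun k =>
    (2 * π * r) ^ (N + 1) * intNorm k.1 ^ (-τ) / (4 * A)
  set window := Set.Ioc (-(1 / 2) : ℝ) (-(1 / 2) + 1)
  have hsub : {x ∈ Set.Ioo (-r) r | Complex.exp (2 * π * Complex.I * x) ∉ LambdaSet ω τ N A} ⊆
      ⋃ k, ((↑) : ℝ → UnitAddCircle) ⁻¹' Metric.closedBall (intDot k.1 ω : UnitAddCircle) (ρ k)
        ∩ window := by
    rintro x ⟨⟨hx1, hx2⟩, hx⟩
    obtain ⟨k, hk, hdist⟩ :=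
      exists_dist_le_of_exp_notMem_LambdaSet hA (abs_le.mpr ⟨hx1.le, hx2.le⟩) hx
    exact Set.mem_iUnion.mpr ⟨⟨k, hk⟩, hdist, by constructor <;> linarith⟩
  calc _ ≤ ∑' k : {k : Fin d → ℤ // k ≠ 0}, volume (((↑) : ℝ → UnitAddCircle) ⁻¹'
          Metric.closedBall (intDot k.1 ω : UnitAddCircle) (ρ k) ∩ window) :=
        (measure_mono hsub).trans (measure_iUnion_le _)
    _ = ∑' k : {k : Fin d → ℤ // k ≠ 0}, ENNReal.ofReal (min 1 (2 * ρ k)) := by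
        refine tsum_congr fun k => ?_
        rw [← AddCircle.add_projection_respects_measure 1 _
          Metric.isClosed_closedBall.measurableSet, AddCircle.volume_closedBall]
    _ ≤ ∑' k : {k : Fin d → ℤ // k ≠ 0}, ENNReal.ofReal ((2 * π * r) ^ (N + 1) / (2 * A)) *
          ENNReal.ofReal (intNorm k.1 ^ (-τ)) := by
        refine ENNReal.tsum_le_tsum fun k => ?_
        rw [← ENNReal.ofReal_mul' (Real.rpow_pos_of_pos (intNorm_pos k.2) _).le]
        refine ENNReal.ofReal_le_ofReal ((min_le_right _ _).trans_eq ?_)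
        simp only [ρ]
        field_simp
        ring
    _ = _ := ENNReal.tsum_mul_left

theorem tendsto_volume_exp_mem_LambdaSet_div (hτ : (d : ℝ) < τ) (hN : 1 ≤ N) (hA : 0 < A) :
    Tendsto (fun r : ℝ =>
        volume {x ∈ Set.Ioo (-r) r | Complex.exp (2 * π * Complex.I * x) ∈ LambdaSet ω τ N A} /
          ENNReal.ofReal (2 * r))
      (𝓝[>] 0) (𝓝 1) := by
  set s := {x : ℝ | Complex.exp (2 * π * Complex.I * x) ∈ LambdaSet ω τ N A}
  set T := ∑' k : {k : Fin d → ℤ // k ≠ 0}, ENNReal.ofReal (intNorm k.1 ^ (-τ))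
  set c := (2 * π) ^ (N + 1) / (4 * A)
  have hsmall : Set.Ioc (0 : ℝ) (1 / 2) ∈ 𝓝[>] 0 := Ioc_mem_nhdsGT (by norm_num)
  have hvol : ∀ r, ENNReal.ofReal (2 * r) = volume (Set.Ioo (-r) r) := fun r => by
    rw [Real.volume_Ioo, sub_neg_eq_add, two_mul]
  refine (tendsto_measure_inter_div_of_tendsto_measure_diff_div (μ := volume) (s := s)
    (B := fun r => Set.Ioo (-r) r) ?_ ?_).congr fun r => by rw [hvol, Set.inter_comm]; rfl
  · filter_upwards [hsmall] with r ⟨hr, _⟩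
    rw [← hvol]
    exact ⟨by simpa using hr, ENNReal.ofReal_ne_top⟩
  have hbound : Tendsto (fun r : ℝ => ENNReal.ofReal (c * r ^ N) * T) (𝓝[>] 0) (𝓝 0) := by
    have hcont : Continuous fun r : ℝ => c * r ^ N := by fun_prop
    have hc := (ENNReal.tendsto_ofReal (hcont.tendsto 0)).mono_left
      (nhdsWithin_le_nhds (s := Set.Ioi 0))
    simpa [zero_pow (by omega : N ≠ 0)] using
      ENNReal.Tendsto.mul_const hc (Or.inr (tsum_rpow_neg_intNorm_ne_top hτ))
  refine tendsto_of_tendsto_of_tendsto_of_le_of_le' tendsto_const_nhds hbound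
    (Eventually.of_forall fun _ => zero_le) ?_
  filter_upwards [hsmall] with r ⟨hr, hr2⟩
  rw [← hvol]
  change volume {x ∈ Set.Ioo (-r) r | x ∉ s} / _ ≤ _
  refine ENNReal.div_le_of_le_mul ((volume_exp_notMem_LambdaSet_le hA hr2).trans_eq ?_)
  rw [mul_right_comm (ENNReal.ofReal _) T, ← ENNReal.ofReal_mul (by positivity)]
  congr 2
  simp only [c]
  field_simp
  ring

end LambdaSet

theorem statement7_general (d : ℕ) (ω : Fin d → ℝ) (τ : ℝ) (hτ : 0 < τ)
    (N : ℕ) (hN : 1 ≤ N) (A : ℝ) (hA : 0 < A) :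
    Filter.Tendsto
      (fun r : ℝ =>
        volume (LambdaSet ω τ N A ∩ Metric.ball (1 : ℂ) r) / volume (Metric.ball (1 : ℂ) r))
      (nhdsWithin 0 (Set.Ioi 0)) (nhds 1) ∧
    ((d : ℝ) < τ →
      Filter.Tendsto
        (fun r : ℝ =>
          volume {x ∈ Set.Ioo (-r) r |
              Complex.exp (2 * Real.pi * Complex.I * (x : ℂ)) ∈ LambdaSet ω τ N A}
            / ENNReal.ofReal (2 * r))
        (nhdsWithin 0 (Set.Ioi 0)) (nhds 1)) :=
  ⟨tendsto_volume_LambdaSet_inter_ball_div hτ.le hN hA,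
    fun hdτ => tendsto_volume_exp_mem_LambdaSet_div hdτ hN hA⟩

/-- if `2τ > d` then `λ = 1` is a point of density (for
two-dimensional Lebesgue measure) of the set `Λ(A;ω,τ,N)`; if moreover `τ > d`,
then `1` is a point of density of `Λ(A;ω,τ,N) ∩ S¹` inside the unit circle (for
arc-length measure, the circle being parameterized by `x ↦ e^{2πix}`). -/
theorem statement7 (d : ℕ) (hd : 0 < d) (ω : Fin d → ℝ) (τ : ℝ) (hτ : 0 < τ)
    (hdio : IsDiophantine ω τ) (N : ℕ) (hN : 1 ≤ N) (A : ℝ) (hA : 0 < A)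
    (h2τ : (d : ℝ) < 2 * τ) :
    Filter.Tendsto
      (fun r : ℝ =>
        volume (LambdaSet ω τ N A ∩ Metric.ball (1 : ℂ) r) / volume (Metric.ball (1 : ℂ) r))
      (nhdsWithin 0 (Set.Ioi 0)) (nhds 1) ∧
    ((d : ℝ) < τ →
      Filter.Tendsto
        (fun r : ℝ =>
          volume {x ∈ Set.Ioo (-r) r |
              Complex.exp (2 * Real.pi * Complex.I * (x : ℂ)) ∈ LambdaSet ω τ N A}
            / ENNReal.ofReal (2 * r))
        (nhdsWithin 0 (Set.Ioi 0)) (nhds 1)) :=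
  statement7_general d ω τ hτ N hN A hA

end KAM
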